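/- The five boxes, each of size (2/3, 1/2, 1/2), admit no orthogonal packing into the unit cube [0,1]^3 (even though their total volume is 5/6 ≤ 1); consequently, the optimal value of the corresponding three-dimensional orthogonal bin packing instance with unit-cube bins is 2. -/

import Mathlib

/-!
A box of width `w > 1 / (k + 1)` placed inside `[0, 1]` contains in its interior one of the grid
points `j / (k + 1)`, `1 ≤ j ≤ k`. Interiors of distinct packed boxes are disjoint, so choosing
such a grid point in every coordinate is injective on the boxes, and a packing holds at most
`∏ kᵢ` boxes. Widths `2/3 > 1/2` and `1/2 > 1/3` give at most `1 · 2 · 2 = 4` boxes, while two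
bins clearly suffice.
-/

/-- `p` is an orthogonal packing of the boxes `w` into the unit cube `[0,1]^d`. -/
def IsOrthogonalPacking {n d : ℕ} (w p : Fin n → Fin d → ℝ) : Prop :=
  (∀ b i, 0 ≤ p b i ∧ p b i + w b i ≤ 1) ∧
  ∀ b c : Fin n, b ≠ c → ∃ i, p b i + w b i ≤ p c i ∨ p c i + w c i ≤ p b i

/-- The boxes `w` can be partitioned into `m` unit-cube bins, each part admitting
an orthogonal packing. -/
def CanBinPack {n d : ℕ} (w : Fin n → Fin d → ℝ) (m : ℕ) : Prop :=
  ∃ f : Fin n → Fin m, ∀ j : Fin m, ∃ p : Fin n → Fin d → ℝ,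
    (∀ b, f b = j → ∀ i, 0 ≤ p b i ∧ p b i + w b i ≤ 1) ∧
    ∀ b c : Fin n, f b = j → f c = j → b ≠ c →
      ∃ i, p b i + w b i ≤ p c i ∨ p c i + w c i ≤ p b i

theorem exists_nat_div_mem_Ioo {k : ℕ} {p w : ℝ} (hp : 0 ≤ p) (hpw : p + w ≤ 1)
    (hw : 1 / (k + 1) < w) : ∃ j ∈ Finset.Icc 1 k, (j / (k + 1) : ℝ) ∈ Set.Ioo p (p + w) := by
  have hk : (0 : ℝ) < k + 1 := by positivity
  rw [div_lt_iff₀ hk] at hw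
  have hfloor_lt : ⌊p * (k + 1)⌋₊ < k :=
    (Nat.floor_lt (mul_nonneg hp hk.le)).2 (by nlinarith)
  have hlt_floor := Nat.lt_floor_add_one (p * (k + 1))
  have hfloor_le := Nat.floor_le (mul_nonneg hp hk.le)
  refine ⟨⌊p * (k + 1)⌋₊ + 1, Finset.mem_Icc.2 ⟨by omega, hfloor_lt⟩, ?_, ?_⟩
  · rw [lt_div_iff₀ hk]
    push_cast
    linarith
  · rw [div_lt_iff₀ hk]
    push_cast
    nlinarith

namespace IsOrthogonalPacking

variable {n d : ℕ} {w p : Fin n → Fin d → ℝ}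

theorem eq_of_mem_Ioo (h : IsOrthogonalPacking w p) {b c : Fin n} {x : Fin d → ℝ}
    (hb : ∀ i, x i ∈ Set.Ioo (p b i) (p b i + w b i))
    (hc : ∀ i, x i ∈ Set.Ioo (p c i) (p c i + w c i)) : b = c := by
  by_contra hne
  obtain ⟨i, hi | hi⟩ := h.2 b c hne
  · linarith [(hb i).2, (hc i).1]
  · linarith [(hc i).2, (hb i).1]

theorem card_le_prod (h : IsOrthogonalPacking w p) (k : Fin d → ℕ)
    (hw : ∀ b i, 1 / (k i + 1 : ℝ) < w b i) : n ≤ ∏ i, k i := by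
  choose j hj hjw using fun b i => exists_nat_div_mem_Ioo (h.1 b i).1 (h.1 b i).2 (hw b i)
  have hinj : Function.Injective j := fun b c hbc =>
    h.eq_of_mem_Ioo (x := fun i => j b i / (k i + 1)) (hjw b) (hbc ▸ hjw c)
  simpa using Finset.card_le_card_of_injOn j (s := Finset.univ)
    (t := Fintype.piFinset fun i => Finset.Icc 1 (k i))
    (fun b _ => Fintype.mem_piFinset.2 (hj b)) hinj.injOn

end IsOrthogonalPacking

namespace CanBinPack

variable {n d : ℕ} {w : Fin n → Fin d → ℝ}

theorem mono {m m' : ℕ} (h : CanBinPack w m) (hm : m ≤ m') : CanBinPack w m' := by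
  obtain ⟨f, hf⟩ := h
  refine ⟨Fin.castLE hm ∘ f, fun j => ?_⟩
  by_cases hj : (j : ℕ) < m
  · obtain ⟨p, hp, hsep⟩ := hf ⟨j, hj⟩
    have hbin : ∀ b, (Fin.castLE hm ∘ f) b = j → f b = ⟨j, hj⟩ := fun b hb => by
      ext; simp [← hb]
    exact ⟨p, fun b hb => hp b (hbin b hb), fun b c hb hc => hsep b c (hbin b hb) (hbin c hc)⟩
  · refine ⟨0, fun b hb => absurd ?_ hj, fun b c hb => absurd ?_ hj⟩ <;>
      · rw [← hb]; exact (f b).isLt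

theorem exists_isOrthogonalPacking (h : CanBinPack w 1) : ∃ p, IsOrthogonalPacking w p := by
  obtain ⟨f, hf⟩ := h
  obtain ⟨p, hp, hsep⟩ := hf 0
  exact ⟨p, fun b => hp b (Subsingleton.elim _ _),
    fun b c => hsep b c (Subsingleton.elim _ _) (Subsingleton.elim _ _)⟩

end CanBinPack

theorem canBinPack_five_two : CanBinPack (fun (_ : Fin 5) => ![(2:ℝ)/3, 1/2, 1/2]) 2 := by
  refine ⟨![0, 0, 0, 0, 1],
    fun _ => ⟨![![0, 0, 0], ![0, 1/2, 0], ![0, 0, 1/2], ![0, 1/2, 1/2], 0], ?_, ?_⟩⟩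
  · intro b _ i
    fin_cases b <;> fin_cases i <;> norm_num
  · intro b c hb hc hbc
    subst hb
    fin_cases b <;> fin_cases c <;> simp_all [Fin.exists_fin_succ]

/-- Five boxes of size `(2/3, 1/2, 1/2)` admit no orthogonal packing into the unit cube
`[0,1]³` — even though their total volume is `5/6 ≤ 1` — and the optimal value of the
corresponding three-dimensional orthogonal bin packing instance with unit-cube bins
is `2`. -/
theorem five_boxes_need_two_bins :
    (∑ b : Fin 5, ∏ i : Fin 3, (fun (_ : Fin 5) => ![(2:ℝ)/3, 1/2, 1/2]) b i = 5 / 6) ∧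
    (¬ ∃ p : Fin 5 → Fin 3 → ℝ,
        IsOrthogonalPacking (fun _ => ![2/3, 1/2, 1/2]) p) ∧
    IsLeast {m : ℕ | CanBinPack (fun (_ : Fin 5) => ![(2:ℝ)/3, 1/2, 1/2]) m} 2 := by
  have hnone : ¬ ∃ p : Fin 5 → Fin 3 → ℝ, IsOrthogonalPacking (fun _ => ![2/3, 1/2, 1/2]) p :=
    fun ⟨_, hp⟩ => by
      simpa [Fin.prod_univ_three] using
        hp.card_le_prod ![1, 2, 2] fun _ i => by fin_cases i <;> norm_num
  refine ⟨by norm_num [Fin.prod_univ_three, Matrix.cons_val_two], hnone, canBinPack_five_two, fun m hm => ?_⟩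
  by_contra! hm2
  exact hnone (hm.mono (by omega : m ≤ 1)).exists_isOrthogonalPacking
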